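/- arXiv:2506.05885 — 2 statements merged into one kernel-verified Lean document; each statement's English description precedes it below -/
import Mathlib

section
/- Let c, s be natural numbers, let v₂, v₃, v₄, v₅ : Fin c → ZMod 2, and let w : Fin s → (Fin c → ZMod 2). Let M' be the (5+s) × (2+c) matrix over ZMod 2 whose rows are: (1,1,0,…,0); (1,1,v₂); (1,1,v₃); (1,0,v₄); (0,1,v₅); and (0,0,w i) for each i, where in each row the first two coordinates are as indicated and the remaining c coordinates are the indicated vector. Let M be the (3+s) × c matrix over ZMod 2 whose rows are v₂, v₃, v₄ + v₅, and w i for each i. Then Matrix.rank M' = Matrix.rank M + 2. -/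
/-!
The argument works over any field `K`. Split `K^(2+c) = K² × K^c` and apply the shear
`(a, b) ↦ (a, b + (a₁ - a₀) • v₄)`: it fixes the rows with `a = (1,1)` or `a = (0,0)` and turns
`(1,0,v₄)`, `(0,1,v₅)` into `(1,0,0)`, `(0,1,v₄+v₅)`. The sheared rows span `K² × W`, with `W`
the row space of `M`: `(1,1,0)` and `(1,0,0)` span `K² × 0`, and subtracting them from the other
rows leaves `(0, u)` for the rows `u` of `M`. Hence `rank M' = 2 + dim W`.
-/

open Module Submodule Set

def Fin.appendLinearEquiv (R M : Type*) [Semiring R] [AddCommMonoid M] [Module R M] (m n : ℕ) :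
    ((Fin m → M) × (Fin n → M)) ≃ₗ[R] (Fin (m + n) → M) where
  __ := Fin.appendEquiv m n
  map_add' _ _ := by
    ext i
    refine Fin.addCases (fun j => ?_) (fun j => ?_) i <;> simp
  map_smul' _ _ := by
    ext i
    refine Fin.addCases (fun j => ?_) (fun j => ?_) i <;> simp

@[simp]
theorem Fin.appendLinearEquiv_apply {R M : Type*} [Semiring R] [AddCommMonoid M] [Module R M]
    {m n : ℕ} (x : (Fin m → M) × (Fin n → M)) :
    Fin.appendLinearEquiv R M m n x = Fin.append x.1 x.2 :=
  rfl

def Submodule.prodEquiv {R M N : Type*} [Semiring R] [AddCommMonoid M] [AddCommMonoid N]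
    [Module R M] [Module R N] (p : Submodule R M) (q : Submodule R N) :
    p.prod q ≃ₗ[R] p × q where
  toFun x := (⟨x.1.1, x.2.1⟩, ⟨x.1.2, x.2.2⟩)
  invFun x := ⟨(x.1, x.2), ⟨x.1.2, x.2.2⟩⟩
  map_add' _ _ := rfl
  map_smul' _ _ := rfl

theorem Submodule.finrank_prod {K M N : Type*} [DivisionRing K] [AddCommGroup M] [AddCommGroup N]
    [Module K M] [Module K N] (p : Submodule K M) (q : Submodule K N)
    [FiniteDimensional K p] [FiniteDimensional K q] :
    finrank K (p.prod q) = finrank K p + finrank K q := by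
  rw [(p.prodEquiv q).finrank_eq, Module.finrank_prod]

theorem Submodule.span_range_eq_top_prod {R M N ι κ : Type*} [Ring R] [AddCommGroup M]
    [AddCommGroup N] [Module R M] [Module R N] {x : ι → M × N} {u : κ → N}
    (hfst : ∀ m, (m, 0) ∈ span R (range x)) (hsnd : ∀ j, (0, u j) ∈ span R (range x))
    (hmem : ∀ i, (x i).2 ∈ span R (range u)) :
    span R (range x) = (⊤ : Submodule R M).prod (span R (range u)) := by
  refine le_antisymm (span_le.2 ?_) ?_
  · rintro _ ⟨i, rfl⟩
    exact ⟨trivial, hmem i⟩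
  · rw [LinearMap.prod_eq_sup_map, map_span, sup_le_iff, span_le, image_subset_iff]
    refine ⟨?_, ?_⟩
    · rintro _ ⟨m, -, rfl⟩
      exact hfst m
    · rintro _ ⟨j, rfl⟩
      exact hsnd j

theorem Matrix.rank_eq_finrank_span_range_comp {K V m n : Type*} [Field K] [Fintype m] [Fintype n]
    [AddCommGroup V] [Module K V] (A : Matrix m n K) (E : (n → K) ≃ₗ[K] V) :
    A.rank = finrank K (span K (range (E ∘ A.row))) := by
  rw [A.rank_eq_finrank_span_row, range_comp, ← E.finrank_map_eq, map_span]
  rfl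

section

variable {K : Type*} [Field K] {c s : ℕ}

def reidemeisterTwoMatrix (v₂ v₃ v₄ v₅ : Fin c → K) (w : Fin s → Fin c → K) :
    Matrix (Fin (5 + s)) (Fin (2 + c)) K :=
  Fin.append
    ![Fin.append ![1, 1] 0, Fin.append ![1, 1] v₂, Fin.append ![1, 1] v₃,
      Fin.append ![1, 0] v₄, Fin.append ![0, 1] v₅]
    (fun i => Fin.append ![0, 0] (w i))

def splitShear (v : Fin c → K) : (Fin (2 + c) → K) ≃ₗ[K] (Fin 2 → K) × (Fin c → K) :=
  (Fin.appendLinearEquiv K K 2 c).symm.trans <| LinearEquiv.skewProd (.refl K _) (.refl K _)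
    (LinearMap.smulRight (LinearMap.proj (R := K) (φ := fun _ : Fin 2 => K) 1 - LinearMap.proj 0) v)

theorem splitShear_append (v : Fin c → K) (a : Fin 2 → K) (b : Fin c → K) :
    splitShear v (Fin.append a b) = (a, b + (a 1 - a 0) • v) := by
  rw [splitShear, LinearEquiv.trans_apply, ← Fin.appendLinearEquiv_apply (R := K) (x := (a, b)),
    LinearEquiv.symm_apply_apply]
  rfl

theorem splitShear_comp_reidemeisterTwoMatrix (v₂ v₃ v₄ v₅ : Fin c → K)
    (w : Fin s → Fin c → K) :
    splitShear v₄ ∘ (reidemeisterTwoMatrix v₂ v₃ v₄ v₅ w).row =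
      Fin.append ![(![1, 1], 0), (![1, 1], v₂), (![1, 1], v₃), (![1, 0], 0), (![0, 1], v₄ + v₅)]
        (fun i => (0, w i)) := by
  ext1 i
  refine Fin.addCases (fun j => ?_) (fun j => ?_) i
  · fin_cases j <;> simp [reidemeisterTwoMatrix, Matrix.row, splitShear_append, add_comm]
  · simp [reidemeisterTwoMatrix, Matrix.row, splitShear_append]

theorem span_range_reidemeisterTwoRows (v₂ v₃ v₄ v₅ : Fin c → K) (w : Fin s → Fin c → K) :
    span K (range (Fin.append
      ![((![1, 1] : Fin 2 → K), (0 : Fin c → K)), (![1, 1], v₂), (![1, 1], v₃), (![1, 0], 0),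
        (![0, 1], v₄ + v₅)] (fun i => (0, w i)))) =
      (⊤ : Submodule K (Fin 2 → K)).prod (span K (range (Fin.append ![v₂, v₃, v₄ + v₅] w))) := by
  set x := Fin.append
      ![((![1, 1] : Fin 2 → K), (0 : Fin c → K)), (![1, 1], v₂), (![1, 1], v₃), (![1, 0], 0),
        (![0, 1], v₄ + v₅)] (fun i => (0, w i))
  set u := Fin.append ![v₂, v₃, v₄ + v₅] w
  have hx : ∀ i, x i ∈ span K (range x) := fun i => subset_span ⟨i, rfl⟩
  have hu : ∀ j, u j ∈ span K (range u) := fun j => subset_span ⟨j, rfl⟩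
  refine span_range_eq_top_prod (fun m => ?_) (fun j => ?_) (fun i => ?_)
  · have : ((m, 0) : (Fin 2 → K) × (Fin c → K)) =
        m 1 • x (Fin.castAdd s 0) + (m 0 - m 1) • x (Fin.castAdd s 3) := by
      simp [x, Prod.ext_iff, funext_iff, Fin.forall_fin_two]
    rw [this]
    exact add_mem (smul_mem _ _ (hx _)) (smul_mem _ _ (hx _))
  · refine Fin.addCases (fun j => ?_) (fun j => ?_) j
    · fin_cases j
      · have : ((0, v₂) : (Fin 2 → K) × (Fin c → K)) =
            x (Fin.castAdd s 1) - x (Fin.castAdd s 0) := by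
          simp [x]
        simpa [u, this] using sub_mem (hx _) (hx _)
      · have : ((0, v₃) : (Fin 2 → K) × (Fin c → K)) =
            x (Fin.castAdd s 2) - x (Fin.castAdd s 0) := by
          simp [x]
        simpa [u, this] using sub_mem (hx _) (hx _)
      · have : ((0, v₄ + v₅) : (Fin 2 → K) × (Fin c → K)) =
            x (Fin.castAdd s 4) + x (Fin.castAdd s 3) - x (Fin.castAdd s 0) := by
          simp [x]
        simpa [u, this] using sub_mem (add_mem (hx _) (hx _)) (hx _)
    · simpa [x, u] using hx (Fin.natAdd 5 j)
  · refine Fin.addCases (fun j => ?_) (fun j => ?_) i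
    · fin_cases j
      · simp [x]
      · simpa [x, u] using hu (Fin.castAdd s 0)
      · simpa [x, u] using hu (Fin.castAdd s 1)
      · simp [x]
      · simpa [x, u] using hu (Fin.castAdd s 2)
    · simpa [x, u] using hu (Fin.natAdd 3 j)

theorem rank_reidemeisterTwoMatrix (v₂ v₃ v₄ v₅ : Fin c → K) (w : Fin s → Fin c → K) :
    (reidemeisterTwoMatrix v₂ v₃ v₄ v₅ w).rank =
      Matrix.rank (Fin.append ![v₂, v₃, v₄ + v₅] w : Matrix (Fin (3 + s)) (Fin c) K) + 2 := by
  rw [Matrix.rank_eq_finrank_span_range_comp _ (splitShear v₄),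
    splitShear_comp_reidemeisterTwoMatrix, span_range_reidemeisterTwoRows, Submodule.finrank_prod,
    finrank_top, finrank_fin_fun, add_comm]
  exact congrArg (· + 2) (Matrix.rank_eq_finrank_span_row _).symm

end

/-- Lemma 3 (linear algebra content): if `M'` is the incidence matrix obtained from `M`
after a second Reidemeister move, then `rank M' = rank M + 2`. -/
theorem stmt_0 (c s : ℕ) (v₂ v₃ v₄ v₅ : Fin c → ZMod 2) (w : Fin s → Fin c → ZMod 2) :
    Matrix.rank
      (Fin.append
        ![Fin.append (![1, 1] : Fin 2 → ZMod 2) (0 : Fin c → ZMod 2),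
          Fin.append (![1, 1] : Fin 2 → ZMod 2) v₂,
          Fin.append (![1, 1] : Fin 2 → ZMod 2) v₃,
          Fin.append (![1, 0] : Fin 2 → ZMod 2) v₄,
          Fin.append (![0, 1] : Fin 2 → ZMod 2) v₅]
        (fun i => Fin.append (![0, 0] : Fin 2 → ZMod 2) (w i)) :
        Matrix (Fin (5 + s)) (Fin (2 + c)) (ZMod 2)) =
    Matrix.rank
      (Fin.append ![v₂, v₃, v₄ + v₅] w : Matrix (Fin (3 + s)) (Fin c) (ZMod 2)) + 2 :=
  rank_reidemeisterTwoMatrix v₂ v₃ v₄ v₅ w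
end

section
/- Fix m ≥ 2 and for each s ≥ 1 define matrices over ZMod 2: P_s is the s × s matrix with (P_s)_{i,j} = 1 if and only if j = i or j = i − 1 (1-indexed), and Q_s is the (s−1) × s matrix with (Q_s)_{i,j} = 1 if and only if j = i or j = i + 1. Let A be the square matrix of size m(m−1)/2 over ZMod 2 whose rows and columns are partitioned into m−1 consecutive blocks of sizes m−1, m−2, …, 1, whose t-th diagonal block is P_{m−t}, whose block in block-row t and block-column t−1 (for 2 ≤ t ≤ m−1) is Q_{m−t+1}, and all of whose other blocks are zero. Then A is invertible over ZMod 2; indeed its determinant equals 1. -/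
/-- The matrix `M₄₃` from the proof of the main theorem.  Its rows and columns are
indexed by pairs `⟨t, i⟩` where `t : Fin (m-1)` is the (0-indexed) block number, the
`t`-th block having size `m - 1 - t` (so the block sizes are `m-1, m-2, …, 1`, and the
total size is `m(m-1)/2`).  The `t`-th diagonal block is `P_{m-1-t}` (the square matrix
with `P_{i,j} = 1` iff `j = i` or `j = i - 1`, 1-indexed), the block in block-row `t`
and block-column `t-1` is `Q` (with `Q_{i,j} = 1` iff `j = i` or `j = i + 1`,
1-indexed), and all other blocks are zero. -/
theorem stmt_7 (m : ℕ) (hm : 2 ≤ m)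
    (A : Matrix ((t : Fin (m - 1)) × Fin (m - 1 - t.1))
                ((t : Fin (m - 1)) × Fin (m - 1 - t.1)) (ZMod 2))
    (hA : ∀ (t : Fin (m - 1)) (i : Fin (m - 1 - t.1))
            (u : Fin (m - 1)) (j : Fin (m - 1 - u.1)),
        A ⟨t, i⟩ ⟨u, j⟩ =
          if (t : ℕ) = (u : ℕ) then
            (if (j : ℕ) = (i : ℕ) ∨ (j : ℕ) + 1 = (i : ℕ) then 1 else 0)
          else if (u : ℕ) + 1 = (t : ℕ) then
            (if (j : ℕ) = (i : ℕ) ∨ (j : ℕ) = (i : ℕ) + 1 then 1 else 0)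
          else 0) :
    IsUnit A ∧ A.det = 1 := by
  classical
  -- ranking function: block offset plus position within block
  set b : ((t : Fin (m - 1)) × Fin (m - 1 - t.1)) → ℕ :=
    fun p => (∑ s ∈ Finset.range p.1.1, (m - 1 - s)) + p.2.1 with hb
  have hoff : ∀ t u : ℕ, t < u →
      (∑ s ∈ Finset.range t, (m - 1 - s)) + (m - 1 - t) ≤ ∑ s ∈ Finset.range u, (m - 1 - s) := by
    intro t u htu
    have h1 : (∑ s ∈ Finset.range t, (m - 1 - s)) + (m - 1 - t)
        = ∑ s ∈ Finset.range (t + 1), (m - 1 - s) := (Finset.sum_range_succ _ t).symm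
    rw [h1]
    exact Finset.sum_le_sum_of_subset (Finset.range_subset_range.2 htu)
  -- strict monotonicity across blocks
  have hcross : ∀ p q : ((t : Fin (m - 1)) × Fin (m - 1 - t.1)), p.1.1 < q.1.1 → b p < b q := by
    intro p q h
    have hp2 : (p.2 : ℕ) < m - 1 - p.1.1 := p.2.2
    calc b p < (∑ s ∈ Finset.range p.1.1, (m - 1 - s)) + (m - 1 - p.1.1) := by
            simp only [hb]; omega
      _ ≤ ∑ s ∈ Finset.range q.1.1, (m - 1 - s) := hoff _ _ h
      _ ≤ b q := Nat.le_add_right _ _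
  have hinj : Function.Injective b := by
    intro p q hpq
    rcases lt_trichotomy p.1.1 q.1.1 with h | h | h
    · exact absurd hpq (hcross p q h).ne
    · have h1 : p.1 = q.1 := Fin.ext h
      rcases p with ⟨pt, pi⟩; rcases q with ⟨qt, qi⟩
      cases h1
      have h2 : (pi : ℕ) = (qi : ℕ) := by
        simp only [hb] at hpq
        omega
      simp only [Sigma.mk.inj_iff, heq_eq_eq, true_and]
      exact Fin.ext h2
    · exact absurd hpq.symm (hcross q p h).ne
  letI : LinearOrder ((t : Fin (m - 1)) × Fin (m - 1 - t.1)) := LinearOrder.lift' b hinj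
  have htri : A.BlockTriangular (fun p => OrderDual.toDual (b p)) := by
    intro p q hqp
    have hbpq : b p < b q := hqp
    rcases p with ⟨t, i⟩; rcases q with ⟨u, j⟩
    rw [hA]
    by_cases h1 : (t : ℕ) = (u : ℕ)
    · rw [if_pos h1]
      have : ¬((j : ℕ) = (i : ℕ) ∨ (j : ℕ) + 1 = (i : ℕ)) := by
        rintro (h | h)
        all_goals {
          have ht : t = u := Fin.ext h1
          cases ht
          simp only [hb] at hbpq
          omega }
      rw [if_neg this]
    · rw [if_neg h1]
      by_cases h2 : (u : ℕ) + 1 = (t : ℕ)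
      · rw [if_pos h2]
        have : ¬((j : ℕ) = (i : ℕ) ∨ (j : ℕ) = (i : ℕ) + 1) := by
          rintro hj
          -- block u comes strictly before block t, so b ⟨u,j⟩ < b ⟨t,i⟩
          have hlt : b ⟨u, j⟩ < b ⟨t, i⟩ := hcross ⟨u, j⟩ ⟨t, i⟩ (show (u : ℕ) < (t : ℕ) by omega)
          exact absurd hbpq hlt.asymm
        rw [if_neg this]
      · rw [if_neg h2]
  have hdiag : ∀ p : ((t : Fin (m - 1)) × Fin (m - 1 - t.1)), A p p = 1 := by
    rintro ⟨t, i⟩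
    rw [hA]
    simp
  have hdet : A.det = 1 := by
    rw [htri.det]
    apply Finset.prod_eq_one
    intro a ha
    obtain ⟨p, -, hp⟩ := Finset.mem_image.1 ha
    haveI : Unique {i // OrderDual.toDual (b i) = a} :=
      ⟨⟨⟨p, hp⟩⟩, by
        rintro ⟨q, hq⟩
        have : b q = b p := OrderDual.toDual.injective (hq.trans hp.symm)
        exact Subtype.ext (hinj this)⟩
    rw [Matrix.det_unique]
    simp only [Matrix.toSquareBlock_def]
    exact hdiag _
  exact ⟨(Matrix.isUnit_iff_isUnit_det A).2 (by simp [hdet]), hdet⟩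
end
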